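/- If (s_1, ..., s_p) is a normal sequence of simple braids, then necessarily s_1 = gcd_L(s_1 s_2 ... s_p, Δ_n). -/

import Mathlib

/-- Relations of the braid group presentation. -/
def braidRels (n : ℕ) : Set (FreeGroup (Fin (n - 1))) :=
  {r | (∃ i j : Fin (n - 1), (i : ℕ) + 2 ≤ (j : ℕ) ∧
          r = FreeGroup.of i * FreeGroup.of j * (FreeGroup.of j * FreeGroup.of i)⁻¹) ∨
       (∃ i j : Fin (n - 1), (i : ℕ) + 1 = (j : ℕ) ∧
          r = FreeGroup.of i * FreeGroup.of j * FreeGroup.of i *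
              (FreeGroup.of j * FreeGroup.of i * FreeGroup.of j)⁻¹)}

/-- Artin's braid group `B_n`. -/
def BraidGroup (n : ℕ) : Type := PresentedGroup (braidRels n)

instance (n : ℕ) : Group (BraidGroup n) :=
  inferInstanceAs (Group (PresentedGroup (braidRels n)))

/-- The Artin generator `σ_{i+1}` (0-indexed `i`). -/
def braidGen {n : ℕ} (i : Fin (n - 1)) : BraidGroup n := PresentedGroup.of i

/-- The positive braid monoid `B_n^+` (submonoid generated by the `σ_i`). -/
def PosBraid (n : ℕ) : Submonoid (BraidGroup n) :=
  Submonoid.closure (Set.range (braidGen (n := n)))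

/-- `x` left-divides `y` (with positive quotient). -/
def DividesL {n : ℕ} (x y : BraidGroup n) : Prop := ∃ z ∈ PosBraid n, y = x * z

/-- `x` right-divides `y` (with positive quotient). -/
def DividesR {n : ℕ} (x y : BraidGroup n) : Prop := ∃ z ∈ PosBraid n, y = z * x

/-- Auxiliary: `deltaAux n m` is the Garside element `Δ_m` viewed inside `B_n`. -/
def deltaAux (n : ℕ) : ℕ → BraidGroup n
  | 0 => 1
  | m + 1 =>
      ((List.range m).map (fun i =>
        if h : i < n - 1 then braidGen ⟨i, h⟩ else 1)).prod * deltaAux n m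

/-- Garside's element `Δ_n = σ_1⋯σ_{n-1} Δ_{n-1}`. -/
def braidDelta (n : ℕ) : BraidGroup n := deltaAux n n

/-- A simple braid: a (positive) divisor of `Δ_n`. -/
def Simple {n : ℕ} (s : BraidGroup n) : Prop :=
  s ∈ PosBraid n ∧ DividesL s (braidDelta n)

/-- Normality of a pair, in the divisor form: every `σ_i` left-dividing `t`
right-divides `s`. -/
def NormalPair {n : ℕ} (s t : BraidGroup n) : Prop :=
  ∀ i : Fin (n - 1), DividesL (braidGen i) t → DividesR (braidGen i) s

/-- `g` is the left gcd of `x` and `y` in `B_n^+`. -/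
def IsLeftGcd {n : ℕ} (g x y : BraidGroup n) : Prop :=
  g ∈ PosBraid n ∧ DividesL g x ∧ DividesL g y ∧
    ∀ d ∈ PosBraid n, DividesL d x → DividesL d y → DividesL d g

/-- Normality of a pair, in the gcd form: `s = gcd_L(st, Δ_n)`. -/
def GNormal {n : ℕ} (s t : BraidGroup n) : Prop :=
  IsLeftGcd s (s * t) (braidDelta n)

/-- `u` is the left lcm of `x` and `y`. -/
def IsLeftLcm {n : ℕ} (u x y : BraidGroup n) : Prop :=
  DividesR x u ∧ DividesR y u ∧ ∀ v, DividesR x v → DividesR y v → DividesR u v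

/-- The position `i` inside `Fin n`. -/
def finL {n : ℕ} (i : Fin (n - 1)) : Fin n := ⟨i, by have := i.isLt; omega⟩

/-- The position `i + 1` inside `Fin n`. -/
def finR {n : ℕ} (i : Fin (n - 1)) : Fin n := ⟨(i : ℕ) + 1, by have := i.isLt; omega⟩

/-- `i` is a descent of the permutation `f` : `f(i) > f(i+1)`. -/
def Descent {n : ℕ} (f : Equiv.Perm (Fin n)) (i : Fin (n - 1)) : Prop :=
  f (finR i) < f (finL i)

/-- `i` is a recoil of the permutation `f` : `f⁻¹(i) > f⁻¹(i+1)`. -/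
def Recoil {n : ℕ} (f : Equiv.Perm (Fin n)) (i : Fin (n - 1)) : Prop :=
  f⁻¹ (finR i) < f⁻¹ (finL i)

/-- Braid words: letters are a generator index together with a sign
(`true` = positive letter `σ_i`, `false` = negative letter `σ_i⁻¹`). -/
abbrev BWord (n : ℕ) := List (Fin (n - 1) × Bool)

/-- The braid represented by a braid word. -/
def evalWord {n : ℕ} (w : BWord n) : BraidGroup n :=
  (w.map (fun x => if x.2 then braidGen x.1 else (braidGen x.1)⁻¹)).prod


/-!
Work in the positive braid monoid `B_n^+` presented by positive words. Garside's Theorem H (an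
equality `σ_a p = σ_b q` forces `p` and `q` to factor through the complements of `a` and `b`)
gives left cancellation, and least common multiples of any two braids with a common multiple.
Since `Δ²` is central and every positive braid divides a power of it, `B_n^+` is an Ore monoid,
so it embeds in its group of fractions and hence in `B_n`; divisibility in `B_n` therefore agrees
with divisibility in `B_n^+`.

The key fact is that a simple divisor `d` of `x y` divides `x e` for some simple divisor `e` of
`y`: for one letter `x = σ_i`, write `lcm(d, σ_i) = σ_i e`. So if `s = gcd(s t, Δ)` and
`t = gcd(T, Δ)`, every simple divisor of `s T` divides `s e` with `e ∣ t`, hence divides `s t`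
and then `s`. Induction along the sequence gives `s_1 = gcd(s_1 ⋯ s_p, Δ)`.
-/

namespace Braid

section Monoid

variable {M : Type*} [Monoid M]

def IsLcm (m x y : M) : Prop := x ∣ m ∧ y ∣ m ∧ ∀ w, x ∣ w → y ∣ w → m ∣ w

def IsGcd (g x y : M) : Prop := g ∣ x ∧ g ∣ y ∧ ∀ d, d ∣ x → d ∣ y → d ∣ g

variable {l m x y z : M}

lemma IsLcm.dvd_of_dvd (h : IsLcm m x y) {w : M} (hx : x ∣ w) (hy : y ∣ w) : m ∣ w :=
  h.2.2 w hx hy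

lemma IsLcm.mul_left [IsLeftCancelMul M] (h : IsLcm m x y) (a : M) :
    IsLcm (a * m) (a * x) (a * y) := by
  refine ⟨mul_dvd_mul_left a h.1, mul_dvd_mul_left a h.2.1, fun w ⟨c, hc⟩ hyw => ?_⟩
  rw [hc, mul_assoc] at hyw ⊢
  exact mul_dvd_mul_left a (h.dvd_of_dvd (dvd_mul_right x c)
    ((IsLeftCancelMul.mul_left_cancel a).dvd_cancel_left.1 hyw))

lemma IsLcm.of_isLcm_left (hl : IsLcm l x z) (hm : IsLcm m l y)
    (hz : ∀ w, x ∣ w → y ∣ w → z ∣ w) : IsLcm m x y :=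
  ⟨hl.1.trans hm.1, hm.2.1, fun w hx hy => hm.dvd_of_dvd (hl.dvd_of_dvd hx (hz w hx hy)) hy⟩

lemma isGcd_self_of_dvd (h : x ∣ y) : IsGcd x x y :=
  ⟨dvd_rfl, h, fun _ hd _ => hd⟩

lemma mul_dvd_pow_succ {Z : M} (hZ : ∀ x, Commute x Z) {a : M} {k : ℕ} (ha : a ∣ Z)
    (hx : x ∣ Z ^ k) : a * x ∣ Z ^ (k + 1) := by
  obtain ⟨t, rfl⟩ := ha
  refine (mul_dvd_mul_left a hx).trans ⟨t, ?_⟩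
  rw [pow_succ', mul_assoc, mul_assoc, ((hZ t).pow_right k).eq]

lemma mul_comm_of_mul_eq_pow [IsLeftCancelMul M] {Z : M} (hZ : ∀ x, Commute x Z) {k : ℕ}
    (h : x * y = Z ^ k) : y * x = Z ^ k :=
  mul_left_cancel (a := x) (by rw [← mul_assoc, h, ← ((hZ x).pow_right k).eq])

/-- Right cancellation and common left multiples both come from `mul_comm_of_mul_eq_pow`. -/
@[reducible] noncomputable def oreSetTop [IsLeftCancelMul M] {Z : M} (hZ : ∀ x, Commute x Z)
    (hdvd : ∀ x : M, ∃ k, x ∣ Z ^ k) : OreLocalization.OreSet (⊤ : Submonoid M) := by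
  have hright : ∀ x : M, ∃ k y, y * x = Z ^ k := fun x => by
    obtain ⟨k, y, hy⟩ := hdvd x
    exact ⟨k, y, mul_comm_of_mul_eq_pow hZ hy.symm⟩
  have common : ∀ r s : M, ∃ u v, u * r = v * s := fun r s => by
    obtain ⟨k, u, hu⟩ := hright r
    obtain ⟨l, v, hv⟩ := hright s
    refine ⟨Z ^ l * u, Z ^ k * v, ?_⟩
    rw [mul_assoc, mul_assoc, hu, hv, ← pow_add, ← pow_add, add_comm]
  choose u v huv using common
  refine ⟨fun r₁ r₂ s h => ⟨1, ?_⟩, fun r s => v r s, fun r s => ⟨u r s, trivial⟩,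
    fun r s => huv r s⟩
  obtain ⟨k, y, hy⟩ := hdvd s
  have : Z ^ k * r₁ = Z ^ k * r₂ := by
    rw [← ((hZ r₁).pow_right k).eq, ← ((hZ r₂).pow_right k).eq, hy, ← mul_assoc, ← mul_assoc, h]
  simp [mul_left_cancel this]

lemma numeratorHom_injective [IsLeftCancelMul M] [OreLocalization.OreSet (⊤ : Submonoid M)] :
    Function.Injective (OreLocalization.numeratorHom (S := (⊤ : Submonoid M))) := by
  intro x y h
  obtain ⟨u, v, h₁, h₂⟩ := OreLocalization.oreDiv_eq_iff.1 h
  simp only [Submonoid.coe_one, mul_one, Submonoid.smul_def, smul_eq_mul] at h₁ h₂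
  rw [h₂] at h₁
  exact (mul_left_cancel h₁).symm

end Monoid

variable {n : ℕ}

def Adjacent (i j : Fin (n - 1)) : Prop := (i : ℕ) + 1 = j ∨ (j : ℕ) + 1 = i

def Distant (i j : Fin (n - 1)) : Prop := (i : ℕ) + 2 ≤ j ∨ (j : ℕ) + 2 ≤ i

instance (i j : Fin (n - 1)) : Decidable (Adjacent i j) := inferInstanceAs (Decidable (_ ∨ _))

lemma Adjacent.symm {i j : Fin (n - 1)} (h : Adjacent i j) : Adjacent j i := Or.symm h

lemma Distant.symm {i j : Fin (n - 1)} (h : Distant i j) : Distant j i := Or.symm h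

lemma Adjacent.ne {i j : Fin (n - 1)} (h : Adjacent i j) : i ≠ j := by
  rintro rfl; rcases h with h | h <;> omega

lemma Distant.ne {i j : Fin (n - 1)} (h : Distant i j) : i ≠ j := by
  rintro rfl; rcases h with h | h <;> omega

lemma Adjacent.not_distant {i j : Fin (n - 1)} (h : Adjacent i j) : ¬ Distant i j := by
  rintro (h' | h') <;> rcases h with h | h <;> omega

lemma eq_or_adjacent_or_distant (i j : Fin (n - 1)) : i = j ∨ Adjacent i j ∨ Distant i j := by
  rcases eq_or_ne i j with h | h
  · exact .inl h
  · have : (i : ℕ) ≠ j := Fin.val_ne_of_ne h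
    unfold Adjacent Distant
    omega

lemma braidGen_mul_comm {i j : Fin (n - 1)} (h : Distant i j) :
    braidGen i * braidGen j = (braidGen j * braidGen i : BraidGroup n) := by
  rcases h with h | h
  exacts [PresentedGroup.mk_eq_mk_of_mul_inv_mem (.inl ⟨i, j, h, rfl⟩),
    (PresentedGroup.mk_eq_mk_of_mul_inv_mem (.inl ⟨j, i, h, rfl⟩)).symm]

lemma braidGen_braid {i j : Fin (n - 1)} (h : Adjacent i j) :
    braidGen i * braidGen j * braidGen i =
      (braidGen j * braidGen i * braidGen j : BraidGroup n) := by
  rcases h with h | h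
  exacts [PresentedGroup.mk_eq_mk_of_mul_inv_mem (.inr ⟨i, j, h, rfl⟩),
    (PresentedGroup.mk_eq_mk_of_mul_inv_mem (.inr ⟨j, i, h, rfl⟩)).symm]

inductive PosStep : List (Fin (n - 1)) → List (Fin (n - 1)) → Prop
  | comm (x y : List (Fin (n - 1))) {i j : Fin (n - 1)} (h : Distant i j) :
      PosStep (x ++ i :: j :: y) (x ++ j :: i :: y)
  | braid (x y : List (Fin (n - 1))) {i j : Fin (n - 1)} (h : Adjacent i j) :
      PosStep (x ++ i :: j :: i :: y) (x ++ j :: i :: j :: y)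

def PosEquiv : List (Fin (n - 1)) → List (Fin (n - 1)) → Prop := Relation.ReflTransGen PosStep

namespace PosStep

variable {u v : List (Fin (n - 1))}

lemma symm (h : PosStep u v) : PosStep v u := by
  cases h with
  | comm x y h => exact .comm x y h.symm
  | braid x y h => exact .braid x y h.symm

lemma append_left (w : List (Fin (n - 1))) (h : PosStep u v) : PosStep (w ++ u) (w ++ v) := by
  cases h with
  | comm x y h => simpa using PosStep.comm (w ++ x) y h
  | braid x y h => simpa using PosStep.braid (w ++ x) y h

lemma append_right (h : PosStep u v) (w : List (Fin (n - 1))) : PosStep (u ++ w) (v ++ w) := by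
  cases h with
  | comm x y h => simpa using PosStep.comm x (y ++ w) h
  | braid x y h => simpa using PosStep.braid x (y ++ w) h

lemma length_eq (h : PosStep u v) : u.length = v.length := by
  cases h <;> simp

lemma cons_cases {a : Fin (n - 1)} {p w : List (Fin (n - 1))} (h : PosStep (a :: p) w) :
    (∃ p', w = a :: p' ∧ PosStep p p') ∨
    (∃ j y, Distant a j ∧ p = j :: y ∧ w = j :: a :: y) ∨
    (∃ j y, Adjacent a j ∧ p = j :: a :: y ∧ w = j :: a :: j :: y) := by
  generalize hu : a :: p = u at h
  cases h with
  | comm x y h =>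
    rcases x with _ | ⟨c, x⟩
    · simp only [List.nil_append, List.cons.injEq] at hu
      obtain ⟨rfl, rfl⟩ := hu
      exact .inr (.inl ⟨_, y, h, rfl, rfl⟩)
    · simp only [List.cons_append, List.cons.injEq] at hu
      obtain ⟨rfl, rfl⟩ := hu
      exact .inl ⟨_, rfl, .comm x y h⟩
  | braid x y h =>
    rcases x with _ | ⟨c, x⟩
    · simp only [List.nil_append, List.cons.injEq] at hu
      obtain ⟨rfl, rfl⟩ := hu
      exact .inr (.inr ⟨_, y, h, rfl, rfl⟩)
    · simp only [List.cons_append, List.cons.injEq] at hu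
      obtain ⟨rfl, rfl⟩ := hu
      exact .inl ⟨_, rfl, .braid x y h⟩

end PosStep

namespace PosEquiv

variable {u v u' v' : List (Fin (n - 1))}

lemma symm (h : PosEquiv u v) : PosEquiv v u := by
  induction h with
  | refl => exact .refl
  | tail _ s ih => exact Relation.ReflTransGen.head s.symm ih

lemma append (h : PosEquiv u v) (h' : PosEquiv u' v') : PosEquiv (u ++ u') (v ++ v') :=
  (h.lift (· ++ u') fun _ _ s => s.append_right u').trans
    (h'.lift (v ++ ·) fun _ _ s => s.append_left v)

lemma length_eq (h : PosEquiv u v) : u.length = v.length := by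
  induction h with
  | refl => rfl
  | tail _ s ih => exact ih.trans s.length_eq

end PosEquiv

def braidCon (n : ℕ) : Con (FreeMonoid (Fin (n - 1))) where
  r u v := PosEquiv u.toList v.toList
  iseqv := ⟨fun _ => .refl, PosEquiv.symm, Relation.ReflTransGen.trans⟩
  mul' h h' := by simpa using h.append h'

/-- The positive braid monoid, abstractly presented; `toBraidGroup_injective` identifies it with
`PosBraid n`. -/
abbrev BraidMonoid (n : ℕ) : Type := (braidCon n).Quotient

namespace BraidMonoid

def mk (w : List (Fin (n - 1))) : BraidMonoid n := ((FreeMonoid.ofList w : FreeMonoid _) : _)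

def gen (i : Fin (n - 1)) : BraidMonoid n := mk [i]

@[simp] lemma mk_append (u v : List (Fin (n - 1))) : mk (u ++ v) = mk u * mk v := rfl

@[simp] lemma mk_cons (i : Fin (n - 1)) (w : List (Fin (n - 1))) :
    mk (i :: w) = gen i * mk w := rfl

lemma mk_eq_mk_iff {u v : List (Fin (n - 1))} : mk u = mk v ↔ PosEquiv u v := Con.eq _

lemma exists_mk_eq (x : BraidMonoid n) : ∃ w, mk w = x :=
  Con.induction_on x fun w => ⟨w.toList, rfl⟩

@[elab_as_elim]
lemma induction_on {P : BraidMonoid n → Prop} (x : BraidMonoid n) (one : P 1)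
    (gen_mul : ∀ i x, P x → P (gen i * x)) : P x := by
  obtain ⟨w, rfl⟩ := exists_mk_eq x
  induction w with
  | nil => exact one
  | cons i w ih => exact gen_mul i _ ih

lemma eq_one_or_exists_eq_gen_mul (x : BraidMonoid n) : x = 1 ∨ ∃ i y, x = gen i * y := by
  obtain ⟨_ | ⟨i, w⟩, rfl⟩ := exists_mk_eq x
  exacts [.inl rfl, .inr ⟨i, mk w, rfl⟩]

/-- Well defined since the braid relations are homogeneous. -/
def len (x : BraidMonoid n) : ℕ :=
  Con.liftOn x (fun w => w.toList.length) fun _ _ h => PosEquiv.length_eq h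

@[simp] lemma len_mk (w : List (Fin (n - 1))) : len (mk w) = w.length := rfl

@[simp] lemma len_gen (i : Fin (n - 1)) : len (gen i) = 1 := rfl

@[simp] lemma len_mul (x y : BraidMonoid n) : len (x * y) = len x + len y := by
  obtain ⟨u, rfl⟩ := exists_mk_eq x
  obtain ⟨v, rfl⟩ := exists_mk_eq y
  rw [← mk_append, len_mk, len_mk, len_mk, List.length_append]

lemma gen_mul_gen_comm {i j : Fin (n - 1)} (h : Distant i j) (x : BraidMonoid n) :
    gen i * (gen j * x) = gen j * (gen i * x) := by
  obtain ⟨w, rfl⟩ := exists_mk_eq x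
  exact mk_eq_mk_iff.2 (.single (by simpa using PosStep.comm [] w h))

lemma gen_mul_gen_mul_gen {i j : Fin (n - 1)} (h : Adjacent i j) (x : BraidMonoid n) :
    gen i * (gen j * (gen i * x)) = gen j * (gen i * (gen j * x)) := by
  obtain ⟨w, rfl⟩ := exists_mk_eq x
  exact mk_eq_mk_iff.2 (.single (by simpa using PosStep.braid [] w h))

section Lift

variable {G : Type*} [Monoid G] {f : Fin (n - 1) → G}

lemma prod_map_eq_of_posEquiv (hcomm : ∀ i j, Distant i j → f i * f j = f j * f i)
    (hbraid : ∀ i j, Adjacent i j → f i * f j * f i = f j * f i * f j)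
    {u v : List (Fin (n - 1))} (h : PosEquiv u v) : (u.map f).prod = (v.map f).prod := by
  induction h with
  | refl => rfl
  | tail _ s ih =>
    rw [ih]
    cases s with
    | comm x y h => simp [← mul_assoc, hcomm _ _ h]
    | braid x y h => simp [← mul_assoc, hbraid _ _ h]

variable (f) in
def lift (hcomm : ∀ i j, Distant i j → f i * f j = f j * f i)
    (hbraid : ∀ i j, Adjacent i j → f i * f j * f i = f j * f i * f j) : BraidMonoid n →* G :=
  (braidCon n).lift (FreeMonoid.lift f) fun _ _ h => by
    simpa [FreeMonoid.lift_apply] using prod_map_eq_of_posEquiv hcomm hbraid h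

@[simp] lemma lift_gen (hcomm : ∀ i j, Distant i j → f i * f j = f j * f i)
    (hbraid : ∀ i j, Adjacent i j → f i * f j * f i = f j * f i * f j) (i : Fin (n - 1)) :
    lift f hcomm hbraid (gen i) = f i := by
  simp [lift, gen, mk]

end Lift

/-! ### Garside's Theorem H -/

/-- `gen a * complement a b = gen b * complement b a` is the least common multiple of `gen a` and
`gen b`. -/
def complement (a b : Fin (n - 1)) : BraidMonoid n :=
  if a = b then 1 else if Adjacent a b then gen b * gen a else gen b

@[simp] lemma complement_self (a : Fin (n - 1)) : complement a a = (1 : BraidMonoid n) := by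
  simp [complement]

lemma complement_of_adjacent {a b : Fin (n - 1)} (h : Adjacent a b) :
    complement a b = (gen b * gen a : BraidMonoid n) := by
  simp [complement, h.ne, h]

lemma complement_of_distant {a b : Fin (n - 1)} (h : Distant a b) :
    complement a b = (gen b : BraidMonoid n) := by
  have : ¬ Adjacent a b := fun h' => h'.not_distant h
  simp [complement, h.ne, this]

lemma gen_mul_complement (a b : Fin (n - 1)) :
    gen a * complement a b = (gen b * complement b a : BraidMonoid n) := by
  rcases eq_or_adjacent_or_distant a b with rfl | h | h
  · rfl
  · simpa [complement_of_adjacent h, complement_of_adjacent h.symm, mul_assoc] using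
      gen_mul_gen_mul_gen h 1
  · simpa [complement_of_distant h, complement_of_distant h.symm] using gen_mul_gen_comm h 1

/-- Theorem H for cofactors `p` of length `< N`. -/
def ComplementFactorization (n N : ℕ) : Prop :=
  ∀ (a b : Fin (n - 1)) (p q : BraidMonoid n), len p < N → gen a * p = gen b * q →
    ∃ r, p = complement a b * r ∧ q = complement b a * r

namespace ComplementFactorization

variable {N : ℕ}

section

variable {a b : Fin (n - 1)} {p q : BraidMonoid n}

lemma cancel (H : ComplementFactorization n N) (hp : len p < N) (h : gen a * p = gen a * q) :
    p = q := by
  obtain ⟨r, rfl, rfl⟩ := H a a p q hp h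
  simp

lemma adjacent (H : ComplementFactorization n N) (hab : Adjacent a b) (hp : len p < N)
    (h : gen a * p = gen b * q) : ∃ r, p = gen b * (gen a * r) ∧ q = gen a * (gen b * r) := by
  simpa [complement_of_adjacent hab, complement_of_adjacent hab.symm, mul_assoc] using
    H a b p q hp h

lemma distant (H : ComplementFactorization n N) (hab : Distant a b) (hp : len p < N)
    (h : gen a * p = gen b * q) : ∃ r, p = gen b * r ∧ q = gen a * r := by
  simpa [complement_of_distant hab, complement_of_distant hab.symm] using H a b p q hp h

end

variable {a j b : Fin (n - 1)} {y S q : BraidMonoid n}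

lemma step_of_distant_of_adjacent (H : ComplementFactorization n N) (haj : Distant a j)
    (hjb : Adjacent j b) (hy : len y < N) (hS : gen a * y = gen b * (gen j * S)) :
    ∃ r, gen j * y = complement a b * r ∧ gen j * (gen b * S) = complement b a * r := by
  rcases eq_or_adjacent_or_distant a b with rfl | hab | hab
  · exact absurd haj hjb.symm.not_distant
  · obtain ⟨T, rfl, hT⟩ := H.adjacent hab hy hS
    obtain ⟨U, rfl, hU⟩ := H.distant haj.symm
      (by have := congrArg len hT; simp only [len_mul, len_gen] at hy this; omega) hT
    obtain ⟨V, rfl, rfl⟩ := H.adjacent hjb.symm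
      (by have := congrArg len hU; simp only [len_mul, len_gen] at hy this; omega) hU
    refine ⟨gen j * (gen b * (gen a * V)), ?_, ?_⟩
    · rw [complement_of_adjacent hab, mul_assoc, gen_mul_gen_comm haj, gen_mul_gen_mul_gen hjb,
        gen_mul_gen_mul_gen hab.symm, gen_mul_gen_comm haj.symm]
    · rw [complement_of_adjacent hab.symm, mul_assoc, gen_mul_gen_mul_gen hab.symm,
        gen_mul_gen_comm haj.symm]
      congr 1
      rw [gen_mul_gen_comm haj, gen_mul_gen_mul_gen hjb]
  · obtain ⟨T, rfl, hT⟩ := H.distant hab hy hS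
    obtain ⟨U, rfl, rfl⟩ := H.distant haj.symm
      (by have := congrArg len hT; simp only [len_mul, len_gen] at hy this; omega) hT
    refine ⟨gen j * (gen b * U), ?_, ?_⟩
    · rw [complement_of_distant hab, gen_mul_gen_mul_gen hjb]
    · rw [complement_of_distant hab.symm, gen_mul_gen_comm hab.symm, gen_mul_gen_comm haj.symm]

lemma step_of_distant_of_distant (H : ComplementFactorization n N) (haj : Distant a j)
    (hjb : Distant j b) (hy : len y < N) (hS : gen a * y = gen b * S) :
    ∃ r, gen j * y = complement a b * r ∧ gen j * S = complement b a * r := by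
  rcases eq_or_adjacent_or_distant a b with rfl | hab | hab
  · obtain rfl := H.cancel hy hS
    exact ⟨gen j * y, by simp, by simp⟩
  · obtain ⟨T, rfl, rfl⟩ := H.adjacent hab hy hS
    refine ⟨gen j * T, ?_, ?_⟩
    · rw [complement_of_adjacent hab, mul_assoc, gen_mul_gen_comm hjb, gen_mul_gen_comm haj.symm]
    · rw [complement_of_adjacent hab.symm, mul_assoc, gen_mul_gen_comm haj.symm,
        gen_mul_gen_comm hjb]
  · obtain ⟨T, rfl, rfl⟩ := H.distant hab hy hS
    exact ⟨gen j * T, by rw [complement_of_distant hab, gen_mul_gen_comm hjb],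
      by rw [complement_of_distant hab.symm, gen_mul_gen_comm haj.symm]⟩

/-- Transports a factorization of `gen j * (gen a * y) = gen b * q` to one of
`gen a * (gen j * y) = gen b * q` when `a` and `j` commute. -/
lemma step_of_distant (H : ComplementFactorization n N) (haj : Distant a j) (hy : len y < N)
    (hS : gen a * y = complement j b * S) (hq : q = complement b j * S) :
    ∃ r, gen j * y = complement a b * r ∧ q = complement b a * r := by
  subst hq
  rcases eq_or_adjacent_or_distant j b with rfl | hjb | hjb
  · simp only [complement_self, one_mul] at hS ⊢
    exact ⟨y, by rw [complement_of_distant haj], by rw [complement_of_distant haj.symm, hS]⟩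
  · rw [complement_of_adjacent hjb, mul_assoc] at hS
    rw [complement_of_adjacent hjb.symm, mul_assoc]
    exact H.step_of_distant_of_adjacent haj hjb hy hS
  · rw [complement_of_distant hjb] at hS
    rw [complement_of_distant hjb.symm]
    exact H.step_of_distant_of_distant haj hjb hy hS

lemma step_of_adjacent_of_adjacent (H : ComplementFactorization n N) (haj : Adjacent a j)
    (hjb : Adjacent j b) (hy : len (gen j * y) < N)
    (hS : gen a * (gen j * y) = gen b * (gen j * S)) :
    ∃ r, gen j * (gen a * y) = complement a b * r ∧
      gen j * (gen b * S) = complement b a * r := by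
  have hy' : len y < N := by simp only [len_mul, len_gen] at hy; omega
  rcases eq_or_adjacent_or_distant a b with rfl | hab | hab
  · obtain rfl := H.cancel hy' (H.cancel hy hS)
    exact ⟨gen j * (gen a * y), by simp, by simp⟩
  · exfalso
    rcases haj with h | h <;> rcases hjb with h' | h' <;> rcases hab with h'' | h'' <;> omega
  · obtain ⟨T, hyT, hST⟩ := H.distant hab hy hS
    obtain ⟨U, rfl, rfl⟩ := H.adjacent hjb hy' hyT
    obtain ⟨V, rfl, hV⟩ := H.adjacent haj.symm
      (by have := congrArg len hST; simp only [len_mul, len_gen] at hy this; omega) hST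
    obtain ⟨X, rfl, rfl⟩ := H.distant hab.symm
      (by simp only [len_mul, len_gen] at hy; omega)
      (H.cancel (by simp only [len_mul, len_gen] at hy ⊢; omega) hV)
    refine ⟨gen j * (gen b * (gen a * (gen j * X))), ?_, ?_⟩
    · rw [complement_of_distant hab, gen_mul_gen_comm hab, gen_mul_gen_mul_gen haj,
        gen_mul_gen_mul_gen hjb]
    · rw [complement_of_distant hab.symm, gen_mul_gen_comm hab.symm,
        gen_mul_gen_mul_gen hjb.symm, gen_mul_gen_mul_gen haj.symm, gen_mul_gen_comm hab]

lemma step_of_adjacent_of_distant (H : ComplementFactorization n N) (haj : Adjacent a j)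
    (hjb : Distant j b) (hy : len (gen j * y) < N) (hS : gen a * (gen j * y) = gen b * S) :
    ∃ r, gen j * (gen a * y) = complement a b * r ∧ gen j * S = complement b a * r := by
  have hy' : len y < N := by simp only [len_mul, len_gen] at hy; omega
  rcases eq_or_adjacent_or_distant a b with rfl | hab | hab
  · exact absurd hjb haj.symm.not_distant
  · obtain ⟨T, hyT, rfl⟩ := H.adjacent hab hy hS
    obtain ⟨U, rfl, hU⟩ := H.distant hjb hy' hyT
    obtain ⟨V, rfl, rfl⟩ := H.adjacent haj
      (by have := congrArg len hU; simp only [len_mul, len_gen] at hy this; omega) hU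
    refine ⟨gen j * (gen a * (gen b * V)), ?_, ?_⟩
    · rw [complement_of_adjacent hab, mul_assoc, gen_mul_gen_mul_gen hab, gen_mul_gen_comm hjb]
      congr 1
      rw [gen_mul_gen_comm hjb.symm, gen_mul_gen_mul_gen haj.symm]
    · rw [complement_of_adjacent hab.symm, mul_assoc, gen_mul_gen_comm hjb.symm,
        gen_mul_gen_mul_gen haj.symm, gen_mul_gen_mul_gen hab, gen_mul_gen_comm hjb]
  · obtain ⟨T, hyT, rfl⟩ := H.distant hab hy hS
    obtain ⟨U, rfl, rfl⟩ := H.distant hjb hy' hyT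
    exact ⟨gen j * (gen a * U),
      by rw [complement_of_distant hab, gen_mul_gen_comm hab, gen_mul_gen_comm hjb],
      by rw [complement_of_distant hab.symm, gen_mul_gen_mul_gen haj.symm]⟩

/-- Transports a factorization of `gen j * (gen a * (gen j * y)) = gen b * q` to one of
`gen a * (gen j * (gen a * y)) = gen b * q` when `a` and `j` are adjacent. -/
lemma step_of_adjacent (H : ComplementFactorization n N) (haj : Adjacent a j)
    (hy : len (gen j * y) < N)
    (hS : gen a * (gen j * y) = complement j b * S) (hq : q = complement b j * S) :
    ∃ r, gen j * (gen a * y) = complement a b * r ∧ q = complement b a * r := by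
  subst hq
  rcases eq_or_adjacent_or_distant j b with rfl | hjb | hjb
  · simp only [complement_self, one_mul] at hS ⊢
    exact ⟨y, by rw [complement_of_adjacent haj, mul_assoc],
      by rw [complement_of_adjacent haj.symm, mul_assoc, hS]⟩
  · rw [complement_of_adjacent hjb, mul_assoc] at hS
    rw [complement_of_adjacent hjb.symm, mul_assoc]
    exact H.step_of_adjacent_of_adjacent haj hjb hy hS
  · rw [complement_of_distant hjb] at hS
    rw [complement_of_distant hjb.symm]
    exact H.step_of_adjacent_of_distant haj hjb hy hS

/-- Induction along a chain of rewriting steps from `a :: P` to `b :: Q`; only the steps touching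
the first letter matter, and they are handled by `step_of_distant` and `step_of_adjacent`. -/
lemma succ (H : ComplementFactorization n N) : ComplementFactorization n (N + 1) := by
  intro a b p q hp h
  obtain ⟨P, rfl⟩ := exists_mk_eq p
  obtain ⟨Q, rfl⟩ := exists_mk_eq q
  suffices ∀ u, PosEquiv u (b :: Q) → ∀ a' P', u = a' :: P' → P'.length ≤ N →
      ∃ r, mk P' = complement a' b * r ∧ mk Q = complement b a' * r from
    this _ (mk_eq_mk_iff.1 h) a P rfl (by simpa [Nat.lt_succ_iff] using hp)
  intro u hu
  induction hu using Relation.ReflTransGen.head_induction_on with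
  | refl =>
    rintro a' P' ⟨⟩ -
    exact ⟨mk Q, by simp, by simp⟩
  | head hstep _ ih =>
    rintro a' P' rfl hP
    rcases hstep.cons_cases with ⟨P₁, rfl, hP₁⟩ | ⟨j, y, haj, rfl, rfl⟩ | ⟨j, y, haj, rfl, rfl⟩
    · rw [mk_eq_mk_iff.2 (.single hP₁)]
      exact ih a' P₁ rfl (hP₁.length_eq ▸ hP)
    · obtain ⟨S, hS, hQ⟩ := ih j (a' :: y) rfl (by simpa using hP)
      simp only [List.length_cons] at hP
      simpa using H.step_of_distant haj (by simp only [len_mk]; omega) (by simpa using hS) hQ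
    · obtain ⟨S, hS, hQ⟩ := ih j (a' :: j :: y) rfl (by simpa using hP)
      simp only [List.length_cons] at hP
      simpa using H.step_of_adjacent haj (by simp only [len_mul, len_gen, len_mk]; omega)
        (by simpa using hS) hQ

end ComplementFactorization

lemma complementFactorization (N : ℕ) : ComplementFactorization n N := by
  induction N with
  | zero => intro _ _ _ _ hp; exact absurd hp (Nat.not_lt_zero _)
  | succ N ih => exact ih.succ

/-- Garside's Theorem H. -/
theorem gen_mul_eq_gen_mul_iff {a b : Fin (n - 1)} {p q : BraidMonoid n} :
    gen a * p = gen b * q ↔ ∃ r, p = complement a b * r ∧ q = complement b a * r := by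
  refine ⟨complementFactorization _ a b p q (Nat.lt_succ_self _), ?_⟩
  rintro ⟨r, rfl, rfl⟩
  rw [← mul_assoc, gen_mul_complement, mul_assoc]

lemma gen_mul_left_cancel {a : Fin (n - 1)} {p q : BraidMonoid n} (h : gen a * p = gen a * q) :
    p = q := by
  obtain ⟨r, rfl, rfl⟩ := gen_mul_eq_gen_mul_iff.1 h
  simp

instance : IsLeftCancelMul (BraidMonoid n) where
  mul_left_cancel x := by
    induction x using induction_on with
    | one => intro p q h; simpa using h
    | gen_mul i x ih => intro p q h; exact ih (gen_mul_left_cancel (by simpa [mul_assoc] using h))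

lemma isLcm_gen_mul_complement (a b : Fin (n - 1)) :
    IsLcm (gen a * complement a b) (gen a) (gen b : BraidMonoid n) := by
  refine ⟨dvd_mul_right _ _, ⟨_, gen_mul_complement a b⟩, ?_⟩
  rintro w ⟨p, rfl⟩ ⟨q, hq⟩
  obtain ⟨r, rfl, -⟩ := gen_mul_eq_gen_mul_iff.1 hq
  exact ⟨r, (mul_assoc _ _ _).symm⟩

theorem exists_isLcm_of_dvd {v x y : BraidMonoid n} (hx : x ∣ v) (hy : y ∣ v) :
    ∃ m, IsLcm m x y := by
  induction hN : len v using Nat.strong_induction_on generalizing v x y with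
  | _ N ih =>
  rcases eq_one_or_exists_eq_gen_mul x with rfl | ⟨a, x, rfl⟩
  · exact ⟨y, one_dvd y, dvd_rfl, fun _ _ h => h⟩
  rcases eq_one_or_exists_eq_gen_mul y with rfl | ⟨b, y, rfl⟩
  · exact ⟨gen a * x, dvd_rfl, one_dvd _, fun _ h _ => h⟩
  -- `lcm (a x) (b y) = lcm (lcm (a x) (a ⬝ complement a b)) (b y)`; after cancelling a first
  -- letter, both inner lcms come from strictly shorter common multiples.
  obtain ⟨rx, rfl⟩ := hx
  obtain ⟨ry, hry⟩ := hy
  rw [mul_assoc, mul_assoc] at hry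
  have hlen : ∀ c z, gen a * x * rx = gen c * z → len z < N := by
    intro c z hz; have := congrArg len hz; simp only [len_mul, len_gen] at this hN; omega
  have hab := isLcm_gen_mul_complement a b
  obtain ⟨R, hR, -⟩ := gen_mul_eq_gen_mul_iff.1 hry
  obtain ⟨m₁, hm₁⟩ := ih _ (hlen a _ (mul_assoc _ _ _)) (dvd_mul_right x rx)
    (hR ▸ dvd_mul_right _ R) rfl
  have hl₁ : IsLcm (gen a * m₁) (gen a * x) (gen a * complement a b) := hm₁.mul_left (gen a)
  obtain ⟨m₁', hm₁'⟩ : gen b ∣ gen a * m₁ := hab.2.1.trans (mul_dvd_mul_left (gen a) hm₁.2.1)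
  obtain ⟨w, hw⟩ := hl₁.dvd_of_dvd (mul_dvd_mul_left _ (dvd_mul_right x rx))
    ⟨R, by rw [mul_assoc, ← hR]⟩
  rw [hry, hm₁', mul_assoc] at hw
  obtain ⟨m₂, hm₂⟩ := ih _ (hlen b (m₁' * w) (by rw [mul_assoc, hry, hw]))
    (dvd_mul_right m₁' w) ⟨ry, (gen_mul_left_cancel hw).symm⟩ rfl
  refine ⟨gen b * m₂, hl₁.of_isLcm_left (hm₁' ▸ hm₂.mul_left (gen b)) fun w hx hy => ?_⟩
  exact hab.dvd_of_dvd ((dvd_mul_right _ x).trans hx) ((dvd_mul_right _ y).trans hy)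

/-! ### The Garside element -/

/-- The generator `σ_{i+1}` indexed by `i : ℕ`, and `1` out of range (as in `deltaAux`). -/
def genN (i : ℕ) : BraidMonoid n := if h : i < n - 1 then gen ⟨i, h⟩ else 1

def ascending (m : ℕ) : BraidMonoid n := ((List.range m).map genN).prod

def descending : ℕ → BraidMonoid n
  | 0 => 1
  | m + 1 => genN m * descending m

def delta : ℕ → BraidMonoid n
  | 0 => 1
  | m + 1 => ascending m * delta m

lemma delta_succ (m : ℕ) : delta (m + 1) = (ascending m * delta m : BraidMonoid n) := rfl

lemma genN_val (i : Fin (n - 1)) : genN (i : ℕ) = gen i := by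
  simp [genN]

lemma ascending_succ (m : ℕ) : ascending (m + 1) = ascending m * (genN m : BraidMonoid n) := by
  simp [ascending, List.range_succ]

lemma genN_commute {i j : ℕ} (h : i + 2 ≤ j) : Commute (genN i) (genN j : BraidMonoid n) := by
  unfold genN
  split_ifs with hi hj
  · simpa [Commute, SemiconjBy] using gen_mul_gen_comm (n := n) (i := ⟨i, hi⟩) (j := ⟨j, hj⟩)
      (.inl h) 1
  all_goals simp

lemma genN_braid {i : ℕ} (h : i + 1 < n - 1) :
    genN i * genN (i + 1) * genN i = (genN (i + 1) * genN i * genN (i + 1) : BraidMonoid n) := by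
  simpa [genN, h, show i < n - 1 by omega, mul_assoc] using
    gen_mul_gen_mul_gen (n := n) (i := ⟨i, by omega⟩) (j := ⟨i + 1, h⟩) (.inl rfl) 1

lemma genN_commute_ascending {j m : ℕ} (h : m + 1 ≤ j) :
    Commute (genN j) (ascending m : BraidMonoid n) := by
  induction m with
  | zero => exact Commute.one_right _
  | succ m ih =>
    rw [ascending_succ]
    exact (ih (by omega)).mul_right (genN_commute (by omega)).symm

lemma genN_commute_descending {j m : ℕ} (h : m + 1 ≤ j) :
    Commute (genN j) (descending m : BraidMonoid n) := by
  induction m with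
  | zero => exact Commute.one_right _
  | succ m ih => exact (genN_commute (by omega)).symm.mul_right (ih (by omega))

lemma genN_commute_delta {j m : ℕ} (h : m ≤ j) : Commute (genN j) (delta m : BraidMonoid n) := by
  induction m with
  | zero => exact Commute.one_right _
  | succ m ih => exact (genN_commute_ascending (by omega)).mul_right (ih (by omega))

lemma genN_succ_mul_ascending {i m : ℕ} (hi : i + 2 ≤ m) (hm : m ≤ n - 1) :
    genN (i + 1) * ascending m = (ascending m * genN i : BraidMonoid n) := by
  induction m with
  | zero => omega
  | succ m ih =>
    rcases Nat.lt_or_ge m (i + 2) with hlt | hi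
    · obtain rfl : m = i + 1 := by omega
      calc genN (i + 1) * ascending (i + 2)
          = genN (i + 1) * ascending i * (genN i * genN (i + 1)) := by
            simp only [ascending_succ, mul_assoc]
        _ = ascending i * (genN (i + 1) * genN i * genN (i + 1)) := by
            rw [(genN_commute_ascending le_rfl).eq]; simp only [mul_assoc]
        _ = ascending (i + 2) * genN i := by
            rw [← genN_braid (by omega)]; simp only [ascending_succ, mul_assoc]
    · rw [ascending_succ, ← mul_assoc, ih hi (by omega), mul_assoc, mul_assoc,
        (genN_commute (by omega)).eq]

lemma genN_mul_descending {k m : ℕ} (hk : k + 2 ≤ m) (hm : m ≤ n - 1) :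
    genN k * descending m = (descending m * genN (k + 1) : BraidMonoid n) := by
  induction m with
  | zero => omega
  | succ m ih =>
    rcases Nat.lt_or_ge m (k + 2) with hlt | hk
    · obtain rfl : m = k + 1 := by omega
      calc genN k * descending (k + 2)
          = genN k * genN (k + 1) * genN k * descending k := by
            simp only [descending, mul_assoc]
        _ = genN (k + 1) * genN k * (genN (k + 1) * descending k) := by
            rw [genN_braid (by omega), mul_assoc]
        _ = descending (k + 2) * genN (k + 1) := by
            rw [(genN_commute_descending le_rfl).eq]; simp only [descending, mul_assoc]
    · simp only [descending]
      rw [← mul_assoc, (genN_commute (by omega)).eq, mul_assoc, ih hk (by omega), mul_assoc]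

lemma delta_succ_eq_mul_descending (m : ℕ) :
    delta (m + 1) = (delta m * descending m : BraidMonoid n) := by
  induction m with
  | zero => simp [delta, descending, ascending]
  | succ m ih =>
    calc delta (m + 2) = ascending m * (genN m * delta m) * descending m := by
          rw [delta_succ, ih, ascending_succ]; simp only [mul_assoc]
      _ = delta (m + 1) * descending (m + 1) := by
          rw [(genN_commute_delta le_rfl).eq, delta_succ, descending]; simp only [mul_assoc]

/-- `σ_1` is handled through `Δ_{m+1} = Δ_m ⬝ σ_m ⋯ σ_1`, the other generators through
`Δ_{m+1} = σ_1 ⋯ σ_m ⬝ Δ_m`. -/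
lemma genN_mul_delta {i m : ℕ} (hi : i + 2 ≤ m) (hm : m ≤ n) :
    genN i * delta m = (delta m * genN (m - 2 - i) : BraidMonoid n) := by
  induction m generalizing i with
  | zero => omega
  | succ m ih =>
    rcases i with _ | i
    · rcases Nat.lt_or_ge m 2 with hm2 | hm2
      · obtain rfl : m = 1 := by omega
        simp [ascending, delta]
      · rw [delta_succ_eq_mul_descending, ← mul_assoc, ih (by omega) (by omega), mul_assoc,
          genN_mul_descending (by omega) (by omega), ← mul_assoc]
        congr 2
        omega
    · rw [delta_succ, ← mul_assoc, genN_succ_mul_ascending (by omega) (by omega), mul_assoc,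
        ih (by omega) (by omega), ← mul_assoc]
      congr 2
      omega

lemma genN_dvd_delta {i m : ℕ} (hi : i + 2 ≤ m) (hm : m ≤ n) :
    genN i ∣ (delta m : BraidMonoid n) := by
  induction m generalizing i with
  | zero => omega
  | succ m ih =>
    rcases i with _ | i
    · obtain ⟨k, rfl⟩ : ∃ k, m = k + 1 := ⟨m - 1, by omega⟩
      rw [delta_succ, ascending, List.range_succ_eq_map, List.map_cons, List.prod_cons, mul_assoc]
      exact dvd_mul_right _ _
    · obtain ⟨z, hz⟩ := ih (i := i) (by omega) (by omega)
      exact ⟨ascending m * z, by rw [delta_succ, hz, ← mul_assoc,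
        ← genN_succ_mul_ascending (by omega) (by omega), mul_assoc]⟩

lemma gen_dvd_delta (i : Fin (n - 1)) : gen i ∣ (delta n : BraidMonoid n) := by
  rw [← genN_val]
  exact genN_dvd_delta (by omega) le_rfl

lemma gen_mul_delta (i : Fin (n - 1)) :
    gen i * delta n = (delta n * gen i.rev : BraidMonoid n) := by
  rw [← genN_val, ← genN_val, genN_mul_delta (by omega) le_rfl, Fin.val_rev]
  congr 2
  omega

lemma exists_mul_delta_eq (x : BraidMonoid n) : ∃ y, x * delta n = delta n * y := by
  induction x using induction_on with
  | one => exact ⟨1, by simp⟩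
  | gen_mul i x ih =>
    obtain ⟨y, hy⟩ := ih
    exact ⟨gen i.rev * y, by rw [mul_assoc, hy, ← mul_assoc, gen_mul_delta, mul_assoc]⟩

lemma commute_delta_sq (x : BraidMonoid n) : Commute x (delta n ^ 2) := by
  induction x using induction_on with
  | one => exact Commute.one_left _
  | gen_mul i x ih =>
    refine Commute.mul_left ?_ ih
    rw [Commute, SemiconjBy, sq, ← mul_assoc, gen_mul_delta, mul_assoc, gen_mul_delta, Fin.rev_rev,
      mul_assoc]

lemma dvd_delta_of_mul_eq {x y : BraidMonoid n} (h : x * y = delta n) : y ∣ delta n := by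
  obtain ⟨z, hz⟩ := exists_mul_delta_eq x
  refine ⟨z, mul_left_cancel (a := x) ?_⟩
  rw [hz, ← h, mul_assoc]

lemma exists_dvd_delta_sq_pow (x : BraidMonoid n) : ∃ k, x ∣ (delta n ^ 2) ^ k := by
  induction x using induction_on with
  | one => exact ⟨0, one_dvd _⟩
  | gen_mul i x ih =>
    obtain ⟨k, hk⟩ := ih
    exact ⟨k + 1, mul_dvd_pow_succ commute_delta_sq
      ((gen_dvd_delta i).trans ⟨delta n, sq _⟩) hk⟩

/-! ### Embedding in the braid group -/

def toBraidGroup : BraidMonoid n →* BraidGroup n :=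
  lift braidGen (fun _ _ => braidGen_mul_comm) (fun _ _ => braidGen_braid)

@[simp] lemma toBraidGroup_gen (i : Fin (n - 1)) : toBraidGroup (gen i) = braidGen i :=
  lift_gen ..

lemma lift_eq_one_of_mem_braidRels {H : Type*} [Group H] (φ : BraidMonoid n →* H)
    {r : FreeGroup (Fin (n - 1))} (hr : r ∈ braidRels n) : FreeGroup.lift (φ ∘ gen) r = 1 := by
  rcases hr with ⟨i, j, h, rfl⟩ | ⟨i, j, h, rfl⟩
  · rw [map_mul, map_inv, mul_inv_eq_one]
    simpa using congrArg φ (gen_mul_gen_comm (.inl h) 1)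
  · rw [map_mul, map_inv, mul_inv_eq_one]
    simpa [mul_assoc] using congrArg φ (gen_mul_gen_mul_gen (.inl h) 1)

/-- `toBraidGroup` followed by the map from `B_n` to the units of the Ore localization of `B_n^+`
is the injective `numeratorHom`. -/
theorem toBraidGroup_injective : Function.Injective (toBraidGroup (n := n)) := by
  let _ := oreSetTop (commute_delta_sq (n := n)) exists_dvd_delta_sq_pow
  let φ : BraidMonoid n →* (OreLocalization (⊤ : Submonoid (BraidMonoid n)) (BraidMonoid n))ˣ :=
    IsUnit.liftRight OreLocalization.numeratorHom fun x =>
      OreLocalization.numerator_isUnit (⟨x, Submonoid.mem_top x⟩ : (⊤ : Submonoid _))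
  let ψ : BraidGroup n →* _ := PresentedGroup.toGroup fun _ => lift_eq_one_of_mem_braidRels φ
  have hψ : ∀ x, ψ (toBraidGroup x) = φ x := fun x => by
    induction x using induction_on with
    | one => simp
    | gen_mul i x ih =>
      rw [map_mul, map_mul, ih, map_mul, toBraidGroup_gen]
      exact congrArg (· * φ x) (PresentedGroup.toGroup.of _)
  intro x y h
  apply numeratorHom_injective
  have := congrArg Units.val ((hψ x).symm.trans ((congrArg ψ h).trans (hψ y)))
  rwa [IsUnit.coe_liftRight, IsUnit.coe_liftRight] at this

lemma mem_posBraid_iff {g : BraidGroup n} : g ∈ PosBraid n ↔ ∃ x, toBraidGroup x = g := by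
  refine ⟨fun hg => ?_, ?_⟩
  · induction hg using Submonoid.closure_induction with
    | mem _ h => obtain ⟨i, rfl⟩ := h; exact ⟨gen i, toBraidGroup_gen i⟩
    | one => exact ⟨1, map_one _⟩
    | mul _ _ _ _ hx hy =>
      obtain ⟨x, rfl⟩ := hx
      obtain ⟨y, rfl⟩ := hy
      exact ⟨x * y, map_mul _ _ _⟩
  · rintro ⟨x, rfl⟩
    induction x using induction_on with
    | one => simp [(PosBraid n).one_mem]
    | gen_mul i x ih =>
      rw [map_mul, toBraidGroup_gen]
      exact (PosBraid n).mul_mem (Submonoid.subset_closure ⟨i, rfl⟩) ih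

instance : CanLift (BraidGroup n) (BraidMonoid n) toBraidGroup (· ∈ PosBraid n) :=
  ⟨fun _ hg => mem_posBraid_iff.1 hg⟩

lemma dividesL_toBraidGroup_iff {x y : BraidMonoid n} :
    DividesL (toBraidGroup x) (toBraidGroup y) ↔ x ∣ y := by
  refine ⟨fun ⟨z, hz, h⟩ => ?_, fun ⟨c, h⟩ => ⟨_, mem_posBraid_iff.2 ⟨c, rfl⟩, by rw [h, map_mul]⟩⟩
  lift z to BraidMonoid n using hz
  exact ⟨z, toBraidGroup_injective (by rw [h, map_mul])⟩

lemma toBraidGroup_delta : toBraidGroup (delta n) = braidDelta n := by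
  suffices ∀ m, toBraidGroup (delta m) = deltaAux n m from this n
  intro m
  induction m with
  | zero => exact map_one _
  | succ m ih =>
    rw [delta_succ, map_mul, ih, deltaAux, ascending, map_list_prod, List.map_map]
    congr 3
    funext i
    simp only [Function.comp_apply, genN]
    split_ifs <;> simp

lemma isLeftGcd_toBraidGroup_iff {g x : BraidMonoid n} :
    IsLeftGcd (toBraidGroup g) (toBraidGroup x) (braidDelta n) ↔ IsGcd g x (delta n) := by
  rw [← toBraidGroup_delta, IsLeftGcd, dividesL_toBraidGroup_iff, dividesL_toBraidGroup_iff]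
  refine ⟨fun ⟨_, hx, hΔ, hd⟩ => ⟨hx, hΔ, fun d hdx hdΔ => ?_⟩,
    fun ⟨hx, hΔ, hd⟩ => ⟨mem_posBraid_iff.2 ⟨g, rfl⟩, hx, hΔ, fun d hd' hdx hdΔ => ?_⟩⟩
  · exact dividesL_toBraidGroup_iff.1 (hd _ (mem_posBraid_iff.2 ⟨d, rfl⟩)
      (dividesL_toBraidGroup_iff.2 hdx) (dividesL_toBraidGroup_iff.2 hdΔ))
  · lift d to BraidMonoid n using hd'
    rw [dividesL_toBraidGroup_iff] at hdx hdΔ ⊢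
    exact hd d hdx hdΔ

/-! ### Normal sequences -/

lemma exists_dvd_delta_of_dvd_gen_mul {i : Fin (n - 1)} {f y : BraidMonoid n}
    (hf : f ∣ delta n) (h : f ∣ gen i * y) : ∃ e, e ∣ delta n ∧ e ∣ y ∧ f ∣ gen i * e := by
  obtain ⟨m, hm⟩ := exists_isLcm_of_dvd h (dvd_mul_right (gen i) y)
  obtain ⟨e, rfl⟩ := hm.2.1
  obtain ⟨w, hw⟩ := hm.dvd_of_dvd hf (gen_dvd_delta i)
  refine ⟨e, (dvd_mul_right e w).trans (dvd_delta_of_mul_eq (x := gen i) (by rw [hw, mul_assoc])),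
    ?_, hm.1⟩
  exact (IsLeftCancelMul.mul_left_cancel (gen i)).dvd_cancel_left.1
    (hm.dvd_of_dvd h (dvd_mul_right _ y))

lemma exists_dvd_delta_of_dvd_mul {d x y : BraidMonoid n} (hd : d ∣ delta n) (h : d ∣ x * y) :
    ∃ e, e ∣ delta n ∧ e ∣ y ∧ d ∣ x * e := by
  induction x using induction_on generalizing d with
  | one => exact ⟨d, hd, by simpa using h, by simp⟩
  | gen_mul i x ih =>
    obtain ⟨f, hf, hfxy, hdf⟩ := exists_dvd_delta_of_dvd_gen_mul hd (by rwa [mul_assoc] at h)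
    obtain ⟨e, he, hey, hfe⟩ := ih hf hfxy
    exact ⟨e, he, hey, by rw [mul_assoc]; exact hdf.trans (mul_dvd_mul_left _ hfe)⟩

lemma isGcd_mul_of_isGcd {s t T : BraidMonoid n} (hst : IsGcd s (s * t) (delta n))
    (htT : IsGcd t T (delta n)) : IsGcd s (s * T) (delta n) := by
  refine ⟨dvd_mul_right s T, hst.2.1, fun d hdT hd => ?_⟩
  obtain ⟨e, he, heT, hde⟩ := exists_dvd_delta_of_dvd_mul hd hdT
  exact hst.2.2 d (hde.trans (mul_dvd_mul_left s (htT.2.2 e heT he))) hd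

theorem isGcd_head_prod {l : List (BraidMonoid n)} (hl : ∀ s ∈ l, s ∣ delta n)
    (hn : l.IsChain fun s t => IsGcd s (s * t) (delta n)) (h : l ≠ []) :
    IsGcd (l.head h) l.prod (delta n) := by
  induction l with
  | nil => contradiction
  | cons s l ih =>
    rcases l with _ | ⟨t, l⟩
    · simpa using isGcd_self_of_dvd (hl s (by simp))
    · rw [List.isChain_cons_cons] at hn
      simpa using isGcd_mul_of_isGcd hn.1 (ih (fun x hx => hl x (by simp [hx])) hn.2 (by simp))

end BraidMonoid

end Braid

open Braid BraidMonoid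

/-- If `(s_1, …, s_p)` is a normal sequence of simple braids then
`s_1 = gcd_L(s_1 s_2 ⋯ s_p, Δ_n)`. -/
theorem normal_head_is_gcd (n : ℕ) (l : List (BraidGroup n))
    (hl : ∀ s ∈ l, Simple s) (hn : List.Chain' GNormal l) (h : l ≠ []) :
    IsLeftGcd (l.head h) l.prod (braidDelta n) := by
  lift l to List (BraidMonoid n) using fun s hs => (hl s hs).1
  rw [List.head_map, ← map_list_prod, isLeftGcd_toBraidGroup_iff]
  refine isGcd_head_prod (fun s hs => ?_) ?_ (by simpa using h)
  · simpa [← toBraidGroup_delta, dividesL_toBraidGroup_iff] using (hl _ (List.mem_map_of_mem hs)).2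
  · have hn : (l.map toBraidGroup).IsChain GNormal := hn
    simpa [List.isChain_map, GNormal, ← map_mul, isLeftGcd_toBraidGroup_iff] using hn
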